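/- Let T_obs, T_1, T_2 be independent exponential random variables with rates λ_obs, λ_1, λ_2 > 0, and set X_i = 1 if T_i ≤ T_obs and X_i = 0 otherwise (i = 1, 2). Then X_1 and X_2 are positively correlated and in particular not independent: P(X_1 = 1, X_2 = 1) > P(X_1 = 1) · P(X_2 = 1). -/

import Mathlib

/-!
Work with the complementary events `{Tobs < Tᵢ}`. Conditionally on `Tobs = t` they are independent
with probabilities `exp (-λᵢ t)`, whose product `exp (-(λ₁ + λ₂) t)` is again an exponential
survival function. Integrating against the law of `Tobs` gives
`P(Tobs < Tᵢ) = λobs / (λobs + λᵢ)` and `P(Tobs < T₁, Tobs < T₂) = λobs / (λobs + λ₁ + λ₂)`.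
Two events have the same covariance as their complements, and
`λobs / (λobs + λ₁ + λ₂) - λobs² / ((λobs + λ₁) (λobs + λ₂))`
`= λobs λ₁ λ₂ / ((λobs + λ₁) (λobs + λ₂) (λobs + λ₁ + λ₂)) > 0`.
-/

open MeasureTheory ProbabilityTheory Real Set

lemma expMeasure_Ioi {r : ℝ} (hr : 0 < r) (t : ℝ) :
    expMeasure r (Ioi t) = ENNReal.ofReal (exp (-(r * max t 0))) := by
  have := isProbabilityMeasure_expMeasure hr
  have hsum := measure_add_measure_compl (μ := expMeasure r) (measurableSet_Iic (a := t))
  rw [compl_Iic, measure_univ, ← ofReal_cdf, cdf_expMeasure_eq hr] at hsum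
  refine (ENNReal.add_right_inj ENNReal.ofReal_ne_top).1 (hsum.trans ?_)
  rcases lt_or_ge t 0 with ht | ht
  · simp [not_le.2 ht, ht.le]
  · have : exp (-(r * t)) ≤ 1 := exp_le_one_iff.2 (by nlinarith)
    rw [if_pos ht, max_eq_left ht, ← ENNReal.ofReal_add (by linarith) (exp_pos _).le]
    simp

lemma expMeasure_Ioi_mul_expMeasure_Ioi {a b : ℝ} (ha : 0 < a) (hb : 0 < b) (t : ℝ) :
    expMeasure a (Ioi t) * expMeasure b (Ioi t) = expMeasure (a + b) (Ioi t) := by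
  rw [expMeasure_Ioi ha, expMeasure_Ioi hb, expMeasure_Ioi (add_pos ha hb),
    ← ENNReal.ofReal_mul (exp_pos _).le, ← exp_add]
  ring_nf

lemma exponentialPDF_mul_expMeasure_Ioi {o r : ℝ} (ho : 0 < o) (hr : 0 < r) (t : ℝ) :
    exponentialPDF o t * expMeasure r (Ioi t)
      = ENNReal.ofReal (o / (o + r)) * exponentialPDF (o + r) t := by
  rcases lt_or_ge t 0 with ht | ht
  · simp [exponentialPDF_of_neg ht]
  rw [exponentialPDF_of_nonneg ht, exponentialPDF_of_nonneg ht, expMeasure_Ioi hr, max_eq_left ht,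
    ← ENNReal.ofReal_mul (by positivity), ← ENNReal.ofReal_mul (by positivity)]
  congr 1
  rw [mul_assoc, ← exp_add]
  field_simp
  ring_nf

lemma lintegral_expMeasure_Ioi {o r : ℝ} (ho : 0 < o) (hr : 0 < r) :
    ∫⁻ t, expMeasure r (Ioi t) ∂expMeasure o = ENNReal.ofReal (o / (o + r)) := by
  have hanti : Antitone fun t => expMeasure r (Ioi t) :=
    fun s t hst => measure_mono (Ioi_subset_Ioi hst)
  have hpdf (s : ℝ) : Measurable (exponentialPDF s) :=
    (measurable_exponentialPDFReal s).ennreal_ofReal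
  rw [show expMeasure o = volume.withDensity (exponentialPDF o) from rfl,
    lintegral_withDensity_eq_lintegral_mul _ (hpdf o) hanti.measurable]
  simp only [Pi.mul_apply, exponentialPDF_mul_expMeasure_Ioi ho hr]
  rw [lintegral_const_mul _ (hpdf _),
    lintegral_exponentialPDF_eq_one (add_pos ho hr), mul_one]

lemma measureReal_inter_sub_mul_eq_compl {Ω : Type*} [MeasurableSpace Ω] (P : Measure Ω)
    [IsProbabilityMeasure P] {A B : Set Ω} (hA : NullMeasurableSet A P)
    (hB : NullMeasurableSet B P) :
    P.real (A ∩ B) - P.real A * P.real B = P.real (Aᶜ ∩ Bᶜ) - P.real Aᶜ * P.real Bᶜ := by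
  have hunion := measureReal_union_add_inter₀' hA (t := B)
  rw [← Set.compl_union, measureReal_compl₀ (hA.union hB), measureReal_compl₀ hA,
    measureReal_compl₀ hB, probReal_univ]
  linarith

lemma ProbabilityTheory.IndepFun.measure_prodMk_preimage {Ω α β : Type*} [MeasurableSpace Ω]
    [MeasurableSpace α] [MeasurableSpace β] {P : Measure Ω} [IsFiniteMeasure P]
    {X : Ω → α} {Y : Ω → β}
    (hXY : IndepFun X Y P) (hX : AEMeasurable X P) (hY : AEMeasurable Y P) {s : Set (α × β)}
    (hs : MeasurableSet s) :
    P ((fun ω => (X ω, Y ω)) ⁻¹' s) = ∫⁻ x, P.map Y (Prod.mk x ⁻¹' s) ∂P.map X := by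
  rw [← Measure.map_apply_of_aemeasurable (hX.prodMk hY) hs,
    (indepFun_iff_map_prod_eq_prod_map_map hX hY).1 hXY, Measure.prod_apply hs]

lemma aemeasurable_of_map_eq_expMeasure {Ω : Type*} [MeasurableSpace Ω] {P : Measure Ω}
    {X : Ω → ℝ} {r : ℝ} (hr : 0 < r) (hX : P.map X = expMeasure r) : AEMeasurable X P :=
  .of_map_ne_zero (hX ▸ (isProbabilityMeasure_expMeasure hr).ne_zero)

section CompetingExponentials

variable {Ω : Type*} [MeasurableSpace Ω] {P : Measure Ω} [IsProbabilityMeasure P]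
  {X Y Z : Ω → ℝ} {o a b : ℝ}

lemma measure_lt_of_indepFun_expMeasure (ho : 0 < o) (ha : 0 < a) (hXY : IndepFun X Y P)
    (hX : P.map X = expMeasure o) (hY : P.map Y = expMeasure a) :
    P {ω | X ω < Y ω} = ENNReal.ofReal (o / (o + a)) := by
  rw [show {ω | X ω < Y ω} = (fun ω => (X ω, Y ω)) ⁻¹' {p | p.1 < p.2} from rfl,
    hXY.measure_prodMk_preimage (aemeasurable_of_map_eq_expMeasure ho hX)
      (aemeasurable_of_map_eq_expMeasure ha hY) (measurableSet_lt measurable_fst measurable_snd),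
    hX, hY]
  exact lintegral_expMeasure_Ioi ho ha

lemma measure_lt_and_lt_of_indepFun_expMeasure (ho : 0 < o) (ha : 0 < a) (hb : 0 < b)
    (hX_YZ : IndepFun X (fun ω => (Y ω, Z ω)) P) (hYZ : IndepFun Y Z P)
    (hX : P.map X = expMeasure o) (hY : P.map Y = expMeasure a) (hZ : P.map Z = expMeasure b) :
    P {ω | X ω < Y ω ∧ X ω < Z ω} = ENNReal.ofReal (o / (o + (a + b))) := by
  have hmY := aemeasurable_of_map_eq_expMeasure ha hY
  have hmZ := aemeasurable_of_map_eq_expMeasure hb hZ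
  have hs : MeasurableSet {p : ℝ × ℝ × ℝ | p.2 ∈ Ioi p.1 ×ˢ Ioi p.1} :=
    (measurableSet_lt measurable_fst (measurable_fst.comp measurable_snd)).inter
      (measurableSet_lt measurable_fst (measurable_snd.comp measurable_snd))
  rw [show {ω | X ω < Y ω ∧ X ω < Z ω}
      = (fun ω => (X ω, (Y ω, Z ω))) ⁻¹' {p | p.2 ∈ Ioi p.1 ×ˢ Ioi p.1} from rfl,
    hX_YZ.measure_prodMk_preimage (aemeasurable_of_map_eq_expMeasure ho hX) (hmY.prodMk hmZ) hs,
    (indepFun_iff_map_prod_eq_prod_map_map hmY hmZ).1 hYZ, hX, hY, hZ]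
  have := isProbabilityMeasure_expMeasure hb
  show ∫⁻ t, ((expMeasure a).prod (expMeasure b)) (Ioi t ×ˢ Ioi t) ∂expMeasure o = _
  simp only [Measure.prod_prod, expMeasure_Ioi_mul_expMeasure_Ioi ha hb]
  exact lintegral_expMeasure_Ioi ho (add_pos ha hb)

end CompetingExponentials

lemma div_add_mul_div_add_lt_div_add_add {o a b : ℝ} (ho : 0 < o) (ha : 0 < a) (hb : 0 < b) :
    o / (o + a) * (o / (o + b)) < o / (o + (a + b)) := by
  rw [← sub_pos, show o / (o + (a + b)) - o / (o + a) * (o / (o + b))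
      = o * a * b / ((o + a) * (o + b) * (o + (a + b))) by field_simp; ring]
  positivity

/-- in the two-gene TiMEx null model, the alteration indicators
`X_i = 1 ↔ T_i ≤ T_obs` are positively correlated, in particular not independent:
`P(X_1 = 1, X_2 = 1) > P(X_1 = 1) · P(X_2 = 1)`. -/
theorem timex_two_gene_null_positively_correlated
    {Ω : Type*} [MeasurableSpace Ω] (P : Measure Ω) [IsProbabilityMeasure P]
    (lam1 lam2 lobs : ℝ) (hlam1 : 0 < lam1) (hlam2 : 0 < lam2) (hlobs : 0 < lobs)
    (T1 T2 Tobs : Ω → ℝ)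
    (hT1 : Measure.map T1 P = expMeasure lam1)
    (hT2 : Measure.map T2 P = expMeasure lam2)
    (hTobs : Measure.map Tobs P = expMeasure lobs)
    (hindep : iIndepFun ![Tobs, T1, T2] P) :
    (P {ω | T1 ω ≤ Tobs ω ∧ T2 ω ≤ Tobs ω}).toReal >
      (P {ω | T1 ω ≤ Tobs ω}).toReal * (P {ω | T2 ω ≤ Tobs ω}).toReal := by
  have hm1 := aemeasurable_of_map_eq_expMeasure hlam1 hT1
  have hm2 := aemeasurable_of_map_eq_expMeasure hlam2 hT2
  have hm0 := aemeasurable_of_map_eq_expMeasure hlobs hTobs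
  have hm : ∀ i, AEMeasurable (![Tobs, T1, T2] i) P := by
    intro i; fin_cases i <;> assumption
  have hind_obs_pair : IndepFun Tobs (fun ω => (T1 ω, T2 ω)) P :=
    (hindep.indepFun_prodMk₀ hm 1 2 0 (by decide) (by decide)).symm
  have hsurv1 : P {ω | Tobs ω < T1 ω} = _ := measure_lt_of_indepFun_expMeasure hlobs hlam1
    (hindep.indepFun (i := 0) (j := 1) (by decide)) hTobs hT1
  have hsurv2 : P {ω | Tobs ω < T2 ω} = _ := measure_lt_of_indepFun_expMeasure hlobs hlam2
    (hindep.indepFun (i := 0) (j := 2) (by decide)) hTobs hT2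
  have hsurv12 := measure_lt_and_lt_of_indepFun_expMeasure hlobs hlam1 hlam2 hind_obs_pair
    (hindep.indepFun (i := 1) (j := 2) (by decide)) hTobs hT1 hT2
  have hcov := measureReal_inter_sub_mul_eq_compl P (nullMeasurableSet_le hm1 hm0)
    (nullMeasurableSet_le hm2 hm0)
  simp only [Set.compl_ofPred, not_le, ← Set.ofPred_and, measureReal_def, hsurv1, hsurv2,
    hsurv12] at hcov
  rw [ENNReal.toReal_ofReal (by positivity), ENNReal.toReal_ofReal (by positivity),
    ENNReal.toReal_ofReal (by positivity)] at hcov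
  linarith [div_add_mul_div_add_lt_div_add_add hlobs hlam1 hlam2]
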